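/- arXiv:2011.03655 — 3 statements merged into one kernel-verified Lean document; each statement's English description precedes it below -/
import Mathlib

section
/- Let (Ω, F, μ) be a probability space, α ∈ (0,1), F′ > 0, and g : Ω → [0,1] measurable with ∫ g dμ ≥ 1 − α + F′. Define L(r) = ∫ max(0, g − r) dμ and R = sup{ r ∈ [0,1] : L(r) ≥ 1 − α }. Then R ∈ [0, α] and ∫ max(0, g − R) dμ = 1 − α; that is, the corrected function max(0, g − R) is an acceptance probability function of a 1−α credible region under μ. -/
/-!
The excess function `L r = ∫ max 0 (g - r) dμ` is `1`-Lipschitz, `L 0 = ∫ g ≥ 1 - α` and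
`L 1 = 0 ≤ 1 - α`. The superlevel set `{r ∈ [0,1] | 1 - α ≤ L r}` is therefore closed and contains
its supremum `R`, and the intermediate value theorem on `[R, 1]` produces a point of that set where
`L = 1 - α`, which can only be `R` itself. Finally `1 - α = L R ≤ 1 - R` gives `R ≤ α`.
-/

open MeasureTheory Set

section Superlevel

variable {L : ℝ → ℝ} {a b c : ℝ}

theorem csSup_superlevel_mem (hL : ContinuousOn L (Icc a b)) (hab : a ≤ b) (ha : c ≤ L a) :
    sSup {r | r ∈ Icc a b ∧ c ≤ L r} ∈ {r | r ∈ Icc a b ∧ c ≤ L r} :=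
  (hL.preimage_isClosed_of_isClosed isClosed_Icc isClosed_Ici).csSup_mem
    ⟨a, ⟨le_rfl, hab⟩, ha⟩ ⟨b, fun _ hr => hr.1.2⟩

theorem apply_csSup_superlevel_eq (hL : ContinuousOn L (Icc a b)) (hab : a ≤ b)
    (ha : c ≤ L a) (hb : L b ≤ c) : L (sSup {r | r ∈ Icc a b ∧ c ≤ L r}) = c := by
  set S := {r | r ∈ Icc a b ∧ c ≤ L r}
  obtain ⟨⟨haR, hRb⟩, hcR⟩ := csSup_superlevel_mem hL hab ha
  obtain ⟨r, ⟨hRr, hrb⟩, hLr⟩ :=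
    intermediate_value_Icc' hRb (hL.mono (Icc_subset_Icc_left haR)) ⟨hb, hcR⟩
  have hrS : r ∈ S := ⟨⟨haR.trans hRr, hrb⟩, hLr.ge⟩
  rwa [le_antisymm (le_csSup ⟨b, fun _ hs => hs.1.2⟩ hrS) hRr] at hLr

end Superlevel

section Excess

variable {Ω : Type*} [MeasurableSpace Ω] {μ : Measure Ω} {g : Ω → ℝ}

theorem MeasureTheory.Integrable.max_zero_sub [IsFiniteMeasure μ] (hg : Integrable g μ) (r : ℝ) :
    Integrable (fun ω => max 0 (g ω - r)) μ :=
  (integrable_const 0).sup (hg.sub (integrable_const r))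

theorem lipschitzWith_integral_max_zero_sub [IsProbabilityMeasure μ] (hg : Integrable g μ) :
    LipschitzWith 1 fun r => ∫ ω, max 0 (g ω - r) ∂μ := by
  refine LipschitzWith.of_dist_le_mul fun r s => ?_
  have hpoint : ∀ ω, ‖max 0 (g ω - r) - max 0 (g ω - s)‖ ≤ |r - s| := fun ω => by
    rw [Real.norm_eq_abs, max_comm 0, max_comm 0, abs_sub_comm r s]
    simpa using abs_max_sub_max_le_abs (g ω - r) (g ω - s) 0
  calc dist (∫ ω, max 0 (g ω - r) ∂μ) (∫ ω, max 0 (g ω - s) ∂μ)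
      = ‖∫ ω, (max 0 (g ω - r) - max 0 (g ω - s)) ∂μ‖ := by
        rw [integral_sub (hg.max_zero_sub r) (hg.max_zero_sub s), dist_eq_norm]
    _ ≤ |r - s| * μ.real univ := norm_integral_le_of_norm_le_const (.of_forall hpoint)
    _ = 1 * dist r s := by simp [Real.dist_eq]

theorem integral_max_zero_sub_le [IsProbabilityMeasure μ] (hg : Integrable g μ)
    (hg1 : ∀ ω, g ω ≤ 1) {r : ℝ} (hr : r ≤ 1) :
    ∫ ω, max 0 (g ω - r) ∂μ ≤ 1 - r := by
  simpa using integral_mono (hg.max_zero_sub r) (integrable_const (1 - r)) fun ω =>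
    max_le (sub_nonneg.2 hr) (by linarith [hg1 ω])

theorem integral_max_zero_sub_zero (hg0 : ∀ ω, 0 ≤ g ω) :
    ∫ ω, max 0 (g ω - 0) ∂μ = ∫ ω, g ω ∂μ := by
  simp only [sub_zero, max_eq_right (hg0 _)]

end Excess

/-- exactness of the corrected acceptance function.  If `g : Ω → [0,1]` has
`∫ g dμ ≥ 1 − α + F'` with `F' > 0`, and `R = sup{r ∈ [0,1] : ∫ max(0, g − r) dμ ≥ 1 − α}`,
then `R ∈ [0,α]` and `∫ max(0, g − R) dμ = 1 − α`. -/
theorem corrected_acceptance_exact_level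
    {Ω : Type*} [MeasurableSpace Ω] (μ : Measure Ω) [IsProbabilityMeasure μ]
    (α F' : ℝ) (hα : α ∈ Set.Ioo (0:ℝ) 1) (hF' : 0 < F')
    (g : Ω → ℝ) (hgmeas : Measurable g) (hg01 : ∀ ω, g ω ∈ Set.Icc (0:ℝ) 1)
    (hcred : 1 - α + F' ≤ ∫ ω, g ω ∂μ) :
    sSup {r : ℝ | r ∈ Set.Icc (0:ℝ) 1 ∧ 1 - α ≤ ∫ ω, max 0 (g ω - r) ∂μ} ∈
      Set.Icc (0:ℝ) α ∧
    ∫ ω, max 0 (g ω -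
        sSup {r : ℝ | r ∈ Set.Icc (0:ℝ) 1 ∧ 1 - α ≤ ∫ ω', max 0 (g ω' - r) ∂μ}) ∂μ
      = 1 - α := by
  have hg : Integrable g μ := .of_mem_Icc 0 1 hgmeas.aemeasurable (.of_forall hg01)
  have hL := (lipschitzWith_integral_max_zero_sub hg).continuous.continuousOn (s := Icc 0 1)
  have hL0 : 1 - α ≤ ∫ ω, max 0 (g ω - 0) ∂μ := by
    rw [integral_max_zero_sub_zero fun ω => (hg01 ω).1]
    linarith
  have hL1 : ∫ ω, max 0 (g ω - 1) ∂μ ≤ 1 - α := by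
    linarith [integral_max_zero_sub_le hg (fun ω => (hg01 ω).2) le_rfl, hα.2]
  have hR := (csSup_superlevel_mem hL zero_le_one hL0).1
  have hLR := apply_csSup_superlevel_eq hL zero_le_one hL0 hL1
  refine ⟨⟨hR.1, ?_⟩, hLR⟩
  linarith [integral_max_zero_sub_le hg (fun ω => (hg01 ω).2) hR.2]
end

section
/- Let Θ ⊆ ℝ^d be compact, X a metric space, ν a σ-finite measure on X, and q : Θ × X → ℝ a function such that (i) for every θ ∈ Θ, q(θ,·) is a probability density with respect to ν, (ii) q is C′-Lipschitz on (Θ × X, ‖·‖ + d_X) for some C′ ≥ 0, and (iii) log q is bounded. Define Post(x,π)(B) = (∫_B q(θ,x) π(dθ)) / (∫_Θ q(θ,x) π(dθ)) for x ∈ X, π ∈ P(Θ), and Borel B ⊆ Θ. Then the map (x,π) ↦ Post(x,π) from (X × P(Θ), d_X + W1) to (P(Θ), W1) is Lipschitz. -/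
/-!
The posterior expectation of a test function `f` is the ratio `∫ f q dπ / ∫ q dπ`, whose
denominator is at least `c₁`. Since `Θ` is bounded, `f` may be normalised to vanish at a point,
so `f` and `q` are bounded and Lipschitz, hence so is `f q`. Numerator and denominator are
therefore integrals of functions Lipschitz in both `θ` and `x`: moving `x` changes them by
`O(d(x, x'))`, and moving `π` changes them by `O(W1(π, π'))` by the duality defining `W1`.
-/

open MeasureTheory

/-- The Wasserstein-1 distance between two measures, via Kantorovich–Rubinstein duality. -/
noncomputable def W1 {T : Type*} [MeasurableSpace T] [PseudoMetricSpace T]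
    (μ ν : Measure T) : ℝ :=
  sSup { r : ℝ | ∃ f : T → ℝ, LipschitzWith 1 f ∧
    r = |(∫ t, f t ∂μ) - ∫ t, f t ∂ν| }

/-- The Bayes posterior on the parameter space: the prior reweighted by the likelihood
`θ ↦ q θ x` and normalized. -/
noncomputable def bayesPost {T X : Type*} [MeasurableSpace T]
    (q : T → X → ℝ) (π : ProbabilityMeasure T) (x : X) : Measure T :=
  (∫⁻ θ, ENNReal.ofReal (q θ x) ∂(π : Measure T))⁻¹ •
    (π : Measure T).withDensity fun θ => ENNReal.ofReal (q θ x)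

open scoped NNReal

lemma abs_integral_le_of_forall_abs_le {α : Type*} [MeasurableSpace α] (μ : Measure α)
    [IsProbabilityMeasure μ] {g : α → ℝ} {C : ℝ} (hg : ∀ t, |g t| ≤ C) : |∫ t, g t ∂μ| ≤ C := by
  simpa using norm_integral_le_of_norm_le_const (μ := μ)
    (ae_of_all _ fun t => (Real.norm_eq_abs (g t)).trans_le (hg t))

section Wasserstein

variable {T : Type*} [PseudoMetricSpace T] [MeasurableSpace T] [OpensMeasurableSpace T]
  {D : ℝ}

lemma LipschitzWith.integrable (hD : ∀ a b : T, dist a b ≤ D) {K : ℝ≥0} {f : T → ℝ}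
    (hf : LipschitzWith K f) (μ : Measure T) [IsFiniteMeasure μ] : Integrable f μ := by
  rcases isEmpty_or_nonempty T with hT | ⟨⟨t₀⟩⟩
  · exact Integrable.of_isEmpty
  refine .of_bound hf.continuous.measurable.aestronglyMeasurable (|f t₀| + K * D)
    (ae_of_all _ fun t => ?_)
  have h := hf.dist_le_mul t t₀
  rw [Real.dist_eq] at h
  have := mul_le_mul_of_nonneg_left (hD t t₀) K.coe_nonneg
  rw [Real.norm_eq_abs]
  linarith [abs_sub_abs_le_abs_sub (f t) (f t₀)]

lemma LipschitzWith.abs_integral_sub_le (hD : ∀ a b : T, dist a b ≤ D) {K : ℝ≥0} {f : T → ℝ}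
    (hf : LipschitzWith K f) (μ : Measure T) [IsProbabilityMeasure μ] (t₀ : T) :
    |∫ t, f t ∂μ - f t₀| ≤ K * D := by
  have hbound : ∀ t, |f t - f t₀| ≤ K * D := fun t =>
    (hf.dist_le_mul t t₀).trans (mul_le_mul_of_nonneg_left (hD t t₀) K.coe_nonneg)
  simpa [integral_sub (hf.integrable hD μ) (integrable_const (f t₀))] using
    abs_integral_le_of_forall_abs_le μ hbound

variable (μ μ' : Measure T) [IsProbabilityMeasure μ] [IsProbabilityMeasure μ']

lemma bddAbove_W1_set (hD : ∀ a b : T, dist a b ≤ D) :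
    BddAbove {r : ℝ | ∃ f : T → ℝ, LipschitzWith 1 f ∧ r = |∫ t, f t ∂μ - ∫ t, f t ∂μ'|} := by
  obtain ⟨t₀⟩ := nonempty_of_isProbabilityMeasure μ
  refine ⟨D + D, ?_⟩
  rintro _ ⟨f, hf, rfl⟩
  have h := hf.abs_integral_sub_le hD μ t₀
  have h' := hf.abs_integral_sub_le hD μ' t₀
  rw [NNReal.coe_one, one_mul] at h h'
  calc |∫ t, f t ∂μ - ∫ t, f t ∂μ'| ≤ |∫ t, f t ∂μ - f t₀| + |f t₀ - ∫ t, f t ∂μ'| :=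
        abs_sub_le _ _ _
    _ ≤ D + D := add_le_add h (abs_sub_comm (∫ t, f t ∂μ') _ ▸ h')

lemma abs_integral_sub_le_W1 (hD : ∀ a b : T, dist a b ≤ D) {f : T → ℝ}
    (hf : LipschitzWith 1 f) : |∫ t, f t ∂μ - ∫ t, f t ∂μ'| ≤ W1 μ μ' :=
  le_csSup (bddAbove_W1_set μ μ' hD) ⟨f, hf, rfl⟩

lemma W1_nonneg (hD : ∀ a b : T, dist a b ≤ D) : 0 ≤ W1 μ μ' :=
  (abs_nonneg _).trans (abs_integral_sub_le_W1 μ μ' hD (LipschitzWith.const' (0 : ℝ)))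

lemma LipschitzWith.abs_integral_sub_le_mul_W1 (hD : ∀ a b : T, dist a b ≤ D) {K : ℝ≥0}
    {f : T → ℝ} (hf : LipschitzWith K f) :
    |∫ t, f t ∂μ - ∫ t, f t ∂μ'| ≤ K * W1 μ μ' := by
  rcases eq_or_ne K 0 with rfl | hK
  · -- a `0`-Lipschitz function is constant, so both integrals equal its value
    obtain ⟨t₀⟩ := nonempty_of_isProbabilityMeasure μ
    have h := hf.abs_integral_sub_le hD μ t₀
    have h' := hf.abs_integral_sub_le hD μ' t₀
    simp only [NNReal.coe_zero, zero_mul, abs_nonpos_iff, sub_eq_zero] at h h' ⊢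
    rw [h, h']
  have hscaled : LipschitzWith 1 fun t => (K⁻¹ : ℝ) * f t := by
    have h := (lipschitzWith_smul (K⁻¹ : ℝ)).comp hf
    rw [nnnorm_inv, NNReal.nnnorm_eq, inv_mul_cancel₀ hK] at h
    exact h
  have h := abs_integral_sub_le_W1 μ μ' hD hscaled
  rw [integral_const_mul, integral_const_mul, ← mul_sub, abs_mul,
    abs_of_nonneg (by positivity), inv_mul_le_iff₀ (by positivity)] at h
  exact h

lemma abs_integral_sub_integral_le_add_mul_W1 (hD : ∀ a b : T, dist a b ≤ D) {u v : T → ℝ}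
    (hu : Integrable u μ) {a : ℝ} (huv : ∀ t, |u t - v t| ≤ a) {K : ℝ≥0}
    (hv : LipschitzWith K v) :
    |∫ t, u t ∂μ - ∫ t, v t ∂μ'| ≤ a + K * W1 μ μ' := by
  have hclose : |∫ t, u t ∂μ - ∫ t, v t ∂μ| ≤ a := by
    rw [← integral_sub hu (hv.integrable hD μ)]
    exact abs_integral_le_of_forall_abs_le μ huv
  calc |∫ t, u t ∂μ - ∫ t, v t ∂μ'|
      ≤ |∫ t, u t ∂μ - ∫ t, v t ∂μ| + |∫ t, v t ∂μ - ∫ t, v t ∂μ'| := abs_sub_le _ _ _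
    _ ≤ a + K * W1 μ μ' := add_le_add hclose (hv.abs_integral_sub_le_mul_W1 μ μ' hD)

lemma W1_le_of_forall_lipschitzWith_one_of_eq_zero (hD : ∀ a b : T, dist a b ≤ D) (t₀ : T)
    {B : ℝ} (hB : ∀ f : T → ℝ, LipschitzWith 1 f → f t₀ = 0 →
      |∫ t, f t ∂μ - ∫ t, f t ∂μ'| ≤ B) :
    W1 μ μ' ≤ B := by
  refine csSup_le ⟨_, 0, LipschitzWith.const' 0, rfl⟩ ?_
  rintro _ ⟨f, hf, rfl⟩
  have hcentered : LipschitzWith 1 fun t => f t - f t₀ := by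
    simpa using hf.sub (LipschitzWith.const (f t₀))
  have h := hB _ hcentered (sub_self _)
  rwa [integral_sub (hf.integrable hD μ) (integrable_const _),
    integral_sub (hf.integrable hD μ') (integrable_const _), integral_const, integral_const,
    probReal_univ, probReal_univ, sub_sub_sub_cancel_right] at h

end Wasserstein

section Posterior

variable {T X : Type*} [MeasurableSpace T] (q : T → X → ℝ) (π : ProbabilityMeasure T) (x : X)

lemma integral_bayesPost (hm : Measurable (q · x)) (h0 : ∀ t, 0 ≤ q t x)
    (hi : Integrable (q · x) π) (f : T → ℝ) :
    ∫ t, f t ∂bayesPost q π x = (∫ t, f t * q t x ∂π) / ∫ t, q t x ∂π := by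
  have hdensity : ∫ t, f t ∂(π : Measure T).withDensity (fun t => ENNReal.ofReal (q t x))
      = ∫ t, f t * q t x ∂π := by
    rw [integral_withDensity_eq_integral_toReal_smul hm.ennreal_ofReal
      (ae_of_all _ fun _ => ENNReal.ofReal_lt_top)]
    congr 1 with t
    rw [ENNReal.toReal_ofReal (h0 t), smul_eq_mul, mul_comm]
  rw [bayesPost, integral_smul_measure, hdensity,
    ← ofReal_integral_eq_lintegral_ofReal hi (ae_of_all _ h0), ENNReal.toReal_inv,
    ENNReal.toReal_ofReal (integral_nonneg h0), smul_eq_mul, inv_mul_eq_div]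

lemma isProbabilityMeasure_bayesPost (h0 : ∀ t, 0 ≤ q t x) (hi : Integrable (q · x) π)
    (hpos : 0 < ∫ t, q t x ∂π) : IsProbabilityMeasure (bayesPost q π x) := by
  constructor
  rw [bayesPost, Measure.smul_apply, withDensity_apply _ MeasurableSet.univ,
    Measure.restrict_univ, ← ofReal_integral_eq_lintegral_ofReal hi (ae_of_all _ h0),
    smul_eq_mul, ENNReal.inv_mul_cancel (ENNReal.ofReal_pos.2 hpos).ne' ENNReal.ofReal_ne_top]

end Posterior

lemma abs_div_sub_div_le {A A' Z Z' c M : ℝ} (hc : 0 < c) (hZ : c ≤ Z) (hZ' : c ≤ Z')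
    (hA' : |A'| ≤ M) : |A / Z - A' / Z'| ≤ |A - A'| / c + M / c ^ 2 * |Z - Z'| := by
  have hZpos : 0 < Z := hc.trans_le hZ
  have hZpos' : 0 < Z' := hc.trans_le hZ'
  have hsplit : A / Z - A' / Z' = (A - A') / Z + A' * (Z' - Z) / (Z * Z') := by
    field_simp
    ring
  have hfirst : |(A - A') / Z| ≤ |A - A'| / c := by
    rw [abs_div, abs_of_pos hZpos]
    exact div_le_div_of_nonneg_left (abs_nonneg _) hc hZ
  have hsecond : |A' * (Z' - Z) / (Z * Z')| ≤ M / c ^ 2 * |Z - Z'| := by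
    rw [abs_div, abs_mul, abs_sub_comm, abs_of_pos (mul_pos hZpos hZpos'), div_mul_eq_mul_div]
    have hM : 0 ≤ M := (abs_nonneg _).trans hA'
    gcongr
    nlinarith
  calc |A / Z - A' / Z'| ≤ |(A - A') / Z| + |A' * (Z' - Z) / (Z * Z')| := by
        rw [hsplit]; exact abs_add_le _ _
    _ ≤ |A - A'| / c + M / c ^ 2 * |Z - Z'| := add_le_add hfirst hsecond

lemma LipschitzWith.mul_of_abs_le {α : Type*} [PseudoMetricSpace α] {f g : α → ℝ}
    {Kf Kg Mf Mg : ℝ≥0} (hf : LipschitzWith Kf f) (hg : LipschitzWith Kg g)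
    (hMf : ∀ a, |f a| ≤ Mf) (hMg : ∀ a, |g a| ≤ Mg) :
    LipschitzWith (Mf * Kg + Mg * Kf) fun a => f a * g a := by
  refine LipschitzWith.of_dist_le_mul fun a b => ?_
  have hsplit : f a * g a - f b * g b = f a * (g a - g b) + g b * (f a - f b) := by ring
  rw [Real.dist_eq, hsplit, NNReal.coe_add, NNReal.coe_mul, NNReal.coe_mul, add_mul]
  refine (abs_add_le _ _).trans (add_le_add ?_ ?_) <;> rw [abs_mul, mul_assoc, ← Real.dist_eq]
  · exact mul_le_mul (hMf a) (hg.dist_le_mul a b) (abs_nonneg _) Mf.coe_nonneg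
  · exact mul_le_mul (hMg b) (hf.dist_le_mul a b) (abs_nonneg _) Mg.coe_nonneg

theorem W1_bayesPost_le {T X : Type*} [PseudoMetricSpace T] [MeasurableSpace T]
    [OpensMeasurableSpace T] [PseudoMetricSpace X] {D K c₂ : ℝ≥0}
    (hD : ∀ a b : T, dist a b ≤ D) {q : T → X → ℝ} (hq_param : ∀ x, LipschitzWith K (q · x))
    (hq_obs : ∀ t, LipschitzWith K (q t)) {c₁ : ℝ} (hc₁ : 0 < c₁)
    (hq : ∀ t x, c₁ ≤ q t x ∧ q t x ≤ c₂) (x x' : X) (π π' : ProbabilityMeasure T) :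
    W1 (bayesPost q π x) (bayesPost q π' x') ≤
      ((D * K + c₂) / c₁ + D * c₂ * K / c₁ ^ 2) * (dist x x' + W1 (π : Measure T) π') := by
  have hq0 : ∀ t y, 0 ≤ q t y := fun t y => hc₁.le.trans (hq t y).1
  have hq_abs : ∀ t y, |q t y| ≤ c₂ := fun t y => (abs_of_nonneg (hq0 t y)).trans_le (hq t y).2
  have hint : ∀ y (ρ : ProbabilityMeasure T), Integrable (q · y) ρ :=
    fun y ρ => (hq_param y).integrable hD _
  have hZ : ∀ y (ρ : ProbabilityMeasure T), c₁ ≤ ∫ t, q t y ∂ρ := fun y ρ => by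
    simpa using integral_mono (integrable_const c₁) (hint y ρ) fun t => (hq t y).1
  have := isProbabilityMeasure_bayesPost q π x (hq0 · x) (hint x π) (hc₁.trans_le (hZ x π))
  have := isProbabilityMeasure_bayesPost q π' x' (hq0 · x') (hint x' π') (hc₁.trans_le (hZ x' π'))
  obtain ⟨t₀⟩ := nonempty_of_isProbabilityMeasure (π : Measure T)
  refine W1_le_of_forall_lipschitzWith_one_of_eq_zero _ _ hD t₀ fun f hf hf₀ => ?_
  have hf_abs : ∀ t, |f t| ≤ D := fun t => by
    simpa [hf₀, Real.dist_eq] using (hf.dist_le_mul t t₀).trans (by simpa using hD t t₀)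
  rw [integral_bayesPost q π x (hq_param x).continuous.measurable (hq0 · x) (hint x π),
    integral_bayesPost q π' x' (hq_param x').continuous.measurable (hq0 · x') (hint x' π')]
  set W := W1 (π : Measure T) π'
  have hW : 0 ≤ W := W1_nonneg _ _ hD
  have hnum : |∫ t, f t * q t x ∂π - ∫ t, f t * q t x' ∂π'| ≤
      D * K * dist x x' + (D * K + c₂) * W := by
    have hfq_int : Integrable (fun t => f t * q t x) π :=
      (hf.mul_of_abs_le (hq_param x) hf_abs (hq_abs · x)).integrable hD _
    have hclose : ∀ t, |f t * q t x - f t * q t x'| ≤ D * K * dist x x' := fun t => by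
      rw [← mul_sub, abs_mul, mul_assoc, ← Real.dist_eq]
      exact mul_le_mul (hf_abs t) ((hq_obs t).dist_le_mul x x') (abs_nonneg _) D.coe_nonneg
    simpa using abs_integral_sub_integral_le_add_mul_W1 π π' hD hfq_int hclose
      (hf.mul_of_abs_le (hq_param x') hf_abs (hq_abs · x'))
  have hdenom : |∫ t, q t x ∂π - ∫ t, q t x' ∂π'| ≤ K * dist x x' + K * W :=
    abs_integral_sub_integral_le_add_mul_W1 π π' hD (hint x π)
      (fun t => (Real.dist_eq _ _).symm.trans_le ((hq_obs t).dist_le_mul x x')) (hq_param x')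
  have hnum' : |∫ t, f t * q t x' ∂π'| ≤ D * c₂ := by
    refine abs_integral_le_of_forall_abs_le _ fun t => ?_
    rw [abs_mul]
    exact mul_le_mul (hf_abs t) (hq_abs t x') (abs_nonneg _) D.coe_nonneg
  have hslack : ((D * K + c₂) / c₁ + D * c₂ * K / c₁ ^ 2) * (dist x x' + W) =
      (D * K * dist x x' + (D * K + c₂) * W) / c₁ + D * c₂ / c₁ ^ 2 * (K * dist x x' + K * W)
        + c₂ / c₁ * dist x x' := by
    field_simp
    ring
  calc _ ≤ |∫ t, f t * q t x ∂π - ∫ t, f t * q t x' ∂π'| / c₁ +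
        D * c₂ / c₁ ^ 2 * |∫ t, q t x ∂π - ∫ t, q t x' ∂π'| :=
        abs_div_sub_div_le hc₁ (hZ x π) (hZ x' π') hnum'
    _ ≤ (D * K * dist x x' + (D * K + c₂) * W) / c₁ +
        D * c₂ / c₁ ^ 2 * (K * dist x x' + K * W) := by gcongr
    _ ≤ _ := by rw [hslack]; exact le_add_of_nonneg_right (by positivity)

theorem posterior_map_lipschitz_in_wasserstein_general
    {d : ℕ} {X : Type*} [MetricSpace X]
    (Θ : Set (EuclideanSpace ℝ (Fin d))) (hΘc : IsCompact Θ)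
    (q : ↥Θ → X → ℝ)
    -- (ii) `q` is `C'`-Lipschitz for the sum metric on `Θ × X`
    (C' : ℝ)
    (hqLip : ∀ θ θ' : ↥Θ, ∀ x x' : X,
      |q θ x - q θ' x'| ≤ C' * (‖(θ : EuclideanSpace ℝ (Fin d)) - θ'‖ + dist x x'))
    -- (iii) `log q` is bounded
    (c₁ c₂ : ℝ) (hc₁ : 0 < c₁)
    (hqbd : ∀ θ x, c₁ ≤ q θ x ∧ q θ x ≤ c₂) :
    ∃ K : ℝ, 0 ≤ K ∧ ∀ (x x' : X) (π π' : ProbabilityMeasure ↥Θ),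
      W1 (bayesPost q π x) (bayesPost q π' x') ≤
        K * (dist x x' + W1 (π : Measure ↥Θ) (π' : Measure ↥Θ)) := by
  obtain ⟨D, hD⟩ := Metric.isBounded_iff_nndist.1 hΘc.isBounded
  have hq_param : ∀ x, LipschitzWith C'.toNNReal (q · x) := fun x =>
    LipschitzWith.of_dist_le' fun θ θ' => by
      simpa [Subtype.dist_eq, dist_eq_norm, Real.dist_eq] using hqLip θ θ' x x
  have hq_obs : ∀ θ, LipschitzWith C'.toNNReal (q θ) := fun θ =>
    LipschitzWith.of_dist_le' fun x x' => by simpa [Real.dist_eq] using hqLip θ θ x x'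
  refine ⟨_, by positivity, W1_bayesPost_le
    (fun (θ θ' : ↥Θ) => NNReal.coe_le_coe.2 (hD θ.2 θ'.2)) hq_param hq_obs hc₁
    fun θ x => ⟨(hqbd θ x).1, (hqbd θ x).2.trans (Real.le_coe_toNNReal c₂)⟩⟩

/-- for a dominated model on a compact `Θ ⊆ ℝ^d` with Lipschitz conditional
density `q` and bounded `log q`, the posterior map `(x,π) ↦ Post(x,π)` is Lipschitz from
`(X × P(Θ), d_X + W1)` to `(P(Θ), W1)`. -/
theorem posterior_map_lipschitz_in_wasserstein
    {d : ℕ} {X : Type*} [MetricSpace X] [MeasurableSpace X] [BorelSpace X]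
    (Θ : Set (EuclideanSpace ℝ (Fin d))) (hΘc : IsCompact Θ)
    (ν : Measure X) [SigmaFinite ν]
    (q : ↥Θ → X → ℝ)
    -- (i) `q(θ,·)` is a probability density with respect to `ν`
    (hdens : ∀ θ : ↥Θ, ∫⁻ x, ENNReal.ofReal (q θ x) ∂ν = 1)
    -- (ii) `q` is `C'`-Lipschitz for the sum metric on `Θ × X`
    (C' : ℝ) (hC' : 0 ≤ C')
    (hqLip : ∀ θ θ' : ↥Θ, ∀ x x' : X,
      |q θ x - q θ' x'| ≤ C' * (‖(θ : EuclideanSpace ℝ (Fin d)) - θ'‖ + dist x x'))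
    -- (iii) `log q` is bounded
    (c₁ c₂ : ℝ) (hc₁ : 0 < c₁)
    (hqbd : ∀ θ x, c₁ ≤ q θ x ∧ q θ x ≤ c₂) :
    ∃ K : ℝ, 0 ≤ K ∧ ∀ (x x' : X) (π π' : ProbabilityMeasure ↥Θ),
      W1 (bayesPost q π x) (bayesPost q π' x') ≤
        K * (dist x x' + W1 (π : Measure ↥Θ) (π' : Measure ↥Θ)) :=
  posterior_map_lipschitz_in_wasserstein_general Θ hΘc q C' hqLip c₁ c₂ hc₁ hqbd
end

section
/- For a, b > 0 let AGD(a,b) = { π ∈ P([0,1]) : π([0,a] ∪ [1−a,1]) ≤ 1−b }, where P([0,1]) is the set of Borel probability measures on [0,1] with the Wasserstein metric W1. Then for all a, b > 0 and all 0 < ε < ab/2, the ε-fattening of AGD(a,b) in (P([0,1]), W1) is contained in AGD(a/2, b − 2ε/a). -/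
/-! The function `x ↦ max 0 (r - infDist x E)` is 1-Lipschitz and lies between `r • 1_E` and
`r • 1_{thickening r E}`, so testing it against `W1` gives
`r μ(E) ≤ r ν(thickening r E) + W1(μ, ν)`. With `E = [0, a/2] ∪ [1 - a/2, 1]` and `r = a/2`
the thickening lies in `[0, a] ∪ [1 - a, 1]`, which has `ν`-mass at most `1 - b`; dividing by
`a/2` gives the claim. -/

open MeasureTheory

/-- `AGD a b`: the set of priors on `[0,1]` putting mass at most `1 − b` on
`[0,a] ∪ [1−a,1]`. -/
def AGD (a b : ℝ) : Set (ProbabilityMeasure ↥(Set.Icc (0:ℝ) 1)) :=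
  {π | ((π : Measure ↥(Set.Icc (0:ℝ) 1))
      {θ : ↥(Set.Icc (0:ℝ) 1) | (θ : ℝ) ≤ a ∨ 1 - a ≤ (θ : ℝ)}).toReal ≤ 1 - b}

open Metric

section BoundedSpace

variable {T : Type*} [PseudoMetricSpace T] [BoundedSpace T] [MeasurableSpace T]
  [OpensMeasurableSpace T] {f : T → ℝ}

theorem LipschitzWith.integrable_of_boundedSpace {K : NNReal} (hf : LipschitzWith K f)
    (μ : Measure T) [IsFiniteMeasure μ] : Integrable f μ := by
  obtain ⟨C, hC⟩ := isBounded_iff_forall_norm_le.1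
    (hf.isBounded_image (Bornology.isBounded_univ.2 ‹_›))
  exact .of_bound hf.continuous.aestronglyMeasurable C
    (.of_forall fun x ↦ hC _ ⟨x, trivial, rfl⟩)

theorem LipschitzWith.abs_integral_sub_le_diam (hf : LipschitzWith 1 f) (μ : Measure T)
    [IsProbabilityMeasure μ] (x₀ : T) :
    |(∫ t, f t ∂μ) - f x₀| ≤ diam (Set.univ : Set T) := by
  have hbound : ∀ x, ‖f x - f x₀‖ ≤ diam (Set.univ : Set T) := fun x ↦ calc
    ‖f x - f x₀‖ = dist (f x) (f x₀) := (Real.dist_eq _ _).symm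
    _ ≤ dist x x₀ := by simpa using hf.dist_le_mul x x₀
    _ ≤ _ := dist_le_diam_of_mem (Bornology.isBounded_univ.2 ‹_›) trivial trivial
  have := norm_integral_le_of_norm_le_const (μ := μ) (.of_forall hbound)
  rwa [integral_sub (hf.integrable_of_boundedSpace μ) (integrable_const _), integral_const,
    probReal_univ, one_smul, mul_one, Real.norm_eq_abs] at this

theorem LipschitzWith.integral_sub_integral_le_W1 (hf : LipschitzWith 1 f) (μ ν : Measure T)
    [IsProbabilityMeasure μ] [IsProbabilityMeasure ν] :
    (∫ t, f t ∂μ) - ∫ t, f t ∂ν ≤ W1 μ ν := by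
  have hbdd : BddAbove {r : ℝ | ∃ g : T → ℝ, LipschitzWith 1 g ∧
      r = |(∫ t, g t ∂μ) - ∫ t, g t ∂ν|} := by
    have ⟨x₀⟩ := nonempty_of_isProbabilityMeasure μ
    refine ⟨2 * diam (Set.univ : Set T), ?_⟩
    rintro _ ⟨g, hg, rfl⟩
    have hμ := hg.abs_integral_sub_le_diam μ x₀
    have hν := hg.abs_integral_sub_le_diam ν x₀
    linarith [abs_sub_le (∫ t, g t ∂μ) (g x₀) (∫ t, g t ∂ν), abs_sub_comm (∫ t, g t ∂ν) (g x₀)]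
  exact (le_abs_self _).trans (le_csSup hbdd ⟨f, hf, rfl⟩)

theorem mul_measureReal_le_mul_measureReal_thickening_add_W1 (μ ν : Measure T)
    [IsProbabilityMeasure μ] [IsProbabilityMeasure ν] {E : Set T} (hE : MeasurableSet E)
    {r : ℝ} (hr : 0 ≤ r) :
    r * μ.real E ≤ r * ν.real (thickening r E) + W1 μ ν := by
  rcases E.eq_empty_or_nonempty with rfl | hne
  · simpa using
      ((LipschitzWith.const (0 : ℝ)).weaken zero_le_one).integral_sub_integral_le_W1 μ ν
  set h : T → ℝ := fun x ↦ max 0 (r - infDist x E)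
  have hlip : LipschitzWith 1 h := by
    simpa using ((LipschitzWith.const r).sub (lipschitz_infDist_pt E)).const_max 0
  have hlower : E.indicator (fun _ ↦ r) ≤ h := fun x ↦ by
    by_cases hx : x ∈ E
    · simp [h, hx, infDist_zero_of_mem hx, hr]
    · simp [h, hx]
  have hupper : h ≤ (thickening r E).indicator (fun _ ↦ r) := fun x ↦ by
    by_cases hx : x ∈ thickening r E
    · simp [h, hx, infDist_nonneg, hr]
    · have hfar : r ≤ infDist x E := not_lt.1 ((mem_thickening_iff_infDist_lt hne).not.1 hx)
      simp [h, hx, hfar]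
  have hμ : r * μ.real E ≤ ∫ x, h x ∂μ := by
    simpa [integral_indicator_const _ hE, mul_comm] using
      integral_mono ((integrable_const r).indicator hE) (hlip.integrable_of_boundedSpace μ) hlower
  have hν : ∫ x, h x ∂ν ≤ r * ν.real (thickening r E) := by
    simpa [integral_indicator_const _ isOpen_thickening.measurableSet, mul_comm] using
      integral_mono (hlip.integrable_of_boundedSpace ν)
        ((integrable_const r).indicator isOpen_thickening.measurableSet) hupper
  linarith [hlip.integral_sub_integral_le_W1 μ ν]

end BoundedSpace

theorem thickening_setOf_le_or_le_subset {s : Set ℝ} {r c d c' d' : ℝ} (hc : c + r ≤ c')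
    (hd : d' ≤ d - r) :
    thickening r {x : s | (x : ℝ) ≤ c ∨ d ≤ x} ⊆ {x : s | (x : ℝ) ≤ c' ∨ d' ≤ x} := by
  rintro x hx
  obtain ⟨y, hy, hxy⟩ := mem_thickening_iff.1 hx
  rw [Subtype.dist_eq, Real.dist_eq, abs_lt] at hxy
  rcases hy with hy | hy
  · exact .inl (by linarith)
  · exact .inr (by linarith)

theorem AGD_fattening_containment_general
    (a b ε : ℝ) (ha : 0 < a)
    (μ : ProbabilityMeasure ↥(Set.Icc (0:ℝ) 1))
    (hμ : ∃ ν ∈ AGD a b,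
      W1 (μ : Measure ↥(Set.Icc (0:ℝ) 1)) (ν : Measure ↥(Set.Icc (0:ℝ) 1)) < ε) :
    μ ∈ AGD (a / 2) (b - 2 * ε / a) := by
  obtain ⟨ν, hν, hW⟩ := hμ
  set E := {θ : ↥(Set.Icc (0:ℝ) 1) | (θ : ℝ) ≤ a / 2 ∨ 1 - a / 2 ≤ (θ : ℝ)}
  have hE : MeasurableSet E :=
    ((isClosed_le continuous_subtype_val continuous_const).union
      (isClosed_le continuous_const continuous_subtype_val)).measurableSet
  have hthick : (ν : Measure _).real (thickening (a / 2) E) ≤ 1 - b :=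
    (measureReal_mono (thickening_setOf_le_or_le_subset (by linarith) (by linarith))).trans hν
  have hmass := mul_measureReal_le_mul_measureReal_thickening_add_W1 (μ : Measure _) ν hE
    (half_pos ha).le
  change (μ : Measure _).real E ≤ 1 - (b - 2 * ε / a)
  have hscaled : a / 2 * ((μ : Measure _).real E - (1 - b)) ≤ ε := by
    linarith [mul_le_mul_of_nonneg_left hthick (half_pos ha).le]
  rw [← le_div_iff₀' (half_pos ha)] at hscaled
  linarith [show ε / (a / 2) = 2 * ε / a by field_simp]

/-- for `a, b > 0` and `0 < ε < ab/2`, the `ε`-fattening (in the Wasserstein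
metric) of `AGD(a,b)` is contained in `AGD(a/2, b − 2ε/a)`. -/
theorem AGD_fattening_containment
    (a b ε : ℝ) (ha : 0 < a) (hb : 0 < b) (hε : 0 < ε) (hε' : ε < a * b / 2)
    (μ : ProbabilityMeasure ↥(Set.Icc (0:ℝ) 1))
    (hμ : ∃ ν ∈ AGD a b,
      W1 (μ : Measure ↥(Set.Icc (0:ℝ) 1)) (ν : Measure ↥(Set.Icc (0:ℝ) 1)) < ε) :
    μ ∈ AGD (a / 2) (b - 2 * ε / a) :=
  AGD_fattening_containment_general a b ε ha μ hμ
end
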